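/- arXiv:2502.00274 — 2 statements merged into one kernel-verified Lean document; each statement's English description precedes it below -/
import Mathlib

section
/- Let λ > 0, θ ∈ (0,1], and M_U the MGF of a nonnegative random variable. Then the function M_A(s) = M_U(s-θλ) M_Y(s) / M_U(-θλ), with M_Y(s) = λ(θλ-s)M_U(s-θλ)/((λ-s)(θλ M_U(s-θλ)-s)), satisfies: its derivative at s = 0 (by continuous extension) equals Ā = (M_U(-θλ)(θ-1) + λθ M_U'(-θλ) + 1)/(θλ M_U(-θλ)). -/
/-!
Writing `g s = M_U(s - θλ)`, the peak AoI factors as `M_A = g · M_Y / g 0`. The MGF `M_Y` has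
`M_Y(0) = 1` because its numerator and denominator agree at `s = 0`, so the product rule gives
`Ā = g'(0) / g(0) + M_Y'(0)`, and the quotient rule gives `M_Y'(0) = (M_U(-θλ)(θ-1) + 1)/(θλ M_U(-θλ))`.
-/

/-- The paper's `M_Y(s)`, with `M = M_U`. -/
noncomputable def mgfY (lam θ : ℝ) (M : ℝ → ℝ) (s : ℝ) : ℝ :=
  lam * (θ * lam - s) * M (s - θ * lam) / ((lam - s) * (θ * lam * M (s - θ * lam) - s))

section mgfY

variable {lam θ : ℝ} {M : ℝ → ℝ}

theorem mgfY_zero (hlam : lam ≠ 0) (hθ : θ ≠ 0) (hM : M (-(θ * lam)) ≠ 0) :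
    mgfY lam θ M 0 = 1 := by
  simp only [mgfY, sub_zero, zero_sub, mul_assoc]
  exact div_self (by simp [*])

theorem hasDerivAt_mgfY_zero {M' : ℝ} (hlam : lam ≠ 0) (hθ : θ ≠ 0) (hM : M (-(θ * lam)) ≠ 0)
    (hMderiv : HasDerivAt M M' (-(θ * lam))) :
    HasDerivAt (mgfY lam θ M)
      ((M (-(θ * lam)) * (θ - 1) + 1) / (θ * lam * M (-(θ * lam)))) 0 := by
  have hg : HasDerivAt (fun s => M (s - θ * lam)) M' 0 :=
    HasDerivAt.comp_sub_const 0 _ (by rwa [zero_sub])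
  have hnum := ((hasDerivAt_id (0 : ℝ)).const_sub (θ * lam)).const_mul lam |>.mul hg
  have hden := ((hasDerivAt_id (0 : ℝ)).const_sub lam).mul
    ((hg.const_mul (θ * lam)).sub (hasDerivAt_id 0))
  refine (hnum.div hden (by simp [*])).congr_deriv ?_
  simp only [id, Pi.mul_apply, Pi.sub_apply, sub_zero, zero_sub]
  field_simp
  ring

end mgfY

/-- The MGF of the peak AoI, `M_A(s) = M_U(s-θλ) M_Y(s) / M_U(-θλ)` with
`M_Y(s) = λ(θλ-s)M_U(s-θλ)/((λ-s)(θλ M_U(s-θλ)-s))`, has derivative at `s = 0` equal to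
`Ā = (M_U(-θλ)(θ-1) + λθ M_U'(-θλ) + 1)/(θλ M_U(-θλ))`. -/
theorem stmt_10 (lam θ : ℝ) (M : ℝ → ℝ) (M' : ℝ)
    (hlam : 0 < lam) (hθ : θ ∈ Set.Ioc (0:ℝ) 1)
    (hM_pos : 0 < M (-(θ * lam)))
    (hMderiv : HasDerivAt M M' (-(θ * lam))) :
    HasDerivAt (fun s => M (s - θ * lam) *
        (lam * (θ * lam - s) * M (s - θ * lam) /
          ((lam - s) * (θ * lam * M (s - θ * lam) - s))) / M (-(θ * lam)))
      ((M (-(θ * lam)) * (θ - 1) + lam * θ * M' + 1) / (θ * lam * M (-(θ * lam)))) 0 := by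
  have hlam0 : lam ≠ 0 := hlam.ne'
  have hθ0 : θ ≠ 0 := hθ.1.ne'
  have hM0 : M (-(θ * lam)) ≠ 0 := hM_pos.ne'
  have hg : HasDerivAt (fun s => M (s - θ * lam)) M' 0 :=
    HasDerivAt.comp_sub_const 0 _ (by rwa [zero_sub])
  have hA : HasDerivAt (fun s => M (s - θ * lam) * mgfY lam θ M s / M (-(θ * lam))) _ 0 :=
    (hg.mul (hasDerivAt_mgfY_zero hlam0 hθ0 hM0 hMderiv)).div_const _
  refine hA.congr_deriv ?_
  rw [mgfY_zero hlam0 hθ0 hM0, zero_sub]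
  field_simp
  ring
end

section
/- Let λ > 0, θ ∈ (0,1], and M_U the MGF of a nonnegative random variable with finite second moment and 0 < M_U(-θλ) < 1. Define M_δ(s) = M_U(s-θλ)(M_Y(s)-1)/(s M_U(-θλ) Ȳ) with M_Y(s) = λ(θλ-s)M_U(s-θλ)/((λ-s)(θλ M_U(s-θλ)-s)) and Ȳ = M_Y'(0). Then the derivative of M_δ at 0 (continuous extension) equals Δ = [M_U(-θλ)((θ²-θ)(M_U(-θλ) + λ M_U'(-θλ)) + θ - 1) + 1] / [λ M_U(-θλ)²(θ²-θ) + λ M_U(-θλ) θ]. -/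
/-!
Writing `m(s) = M_U(s - θλ)`, one has `M_Y(s) - 1 = s N(s) / D(s)` with
`N(s) = λ(1 - m(s)) + θλ m(s) - s` and `D(s) = (λ - s)(θλ m(s) - s)`, `D(0) ≠ 0`.
Hence `Ȳ = N(0)/D(0)`, and near `0` the extended `M_δ` agrees with the differentiable function
`m N / (D M_U(-θλ) Ȳ)`, whose value at `0` is exactly `1`. The quotient rule gives `Δ`.
-/

open Topology Filter

namespace AoI

/-- `m` stands for the shifted transform `s ↦ M_U(s - θλ)`. -/
noncomputable def mgfY (lam θ : ℝ) (m : ℝ → ℝ) (s : ℝ) : ℝ :=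
  lam * (θ * lam - s) * m s / ((lam - s) * (θ * lam * m s - s))

def num (lam θ : ℝ) (m : ℝ → ℝ) (s : ℝ) : ℝ := lam * (1 - m s) + θ * lam * m s - s

def den (lam θ : ℝ) (m : ℝ → ℝ) (s : ℝ) : ℝ := (lam - s) * (θ * lam * m s - s)

noncomputable def mgfDelta (lam θ : ℝ) (m : ℝ → ℝ) (a : ℝ) (s : ℝ) : ℝ :=
  if s = 0 then 1 else m s * (mgfY lam θ m s - 1) / (s * a * deriv (mgfY lam θ m) 0)

variable {lam θ a m' : ℝ} {m : ℝ → ℝ}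

theorem mgfY_sub_one {s : ℝ} (hs : den lam θ m s ≠ 0) :
    mgfY lam θ m s - 1 = s * (num lam θ m s / den lam θ m s) := by
  unfold mgfY num den at *
  rw [div_sub_one hs, mul_div_assoc']
  congr 1
  ring

theorem num_zero (hm : m 0 = a) : num lam θ m 0 = lam * (1 - a + a * θ) := by
  simp only [num, hm]; ring

theorem den_zero (hm : m 0 = a) : den lam θ m 0 = lam * (θ * lam * a) := by
  simp only [den, hm]; ring

theorem hasDerivAt_num {x : ℝ} (hm : HasDerivAt m m' x) :
    HasDerivAt (num lam θ m) (-(lam * m') + θ * lam * m' - 1) x :=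
  ((((hm.const_sub 1).const_mul lam).add (hm.const_mul (θ * lam))).sub
    (hasDerivAt_id' x)).congr_deriv (by ring)

theorem hasDerivAt_den {x : ℝ} (hm : HasDerivAt m m' x) :
    HasDerivAt (den lam θ m) (-(θ * lam * m x - x) + (lam - x) * (θ * lam * m' - 1)) x :=
  (((hasDerivAt_id' x).const_sub lam).mul
    ((hm.const_mul (θ * lam)).sub (hasDerivAt_id' x))).congr_deriv
    (by simp only [Pi.sub_apply]; ring)

theorem eventually_den_ne_zero (hm : ContinuousAt m 0) (hm0 : m 0 = a) (hlam : lam ≠ 0)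
    (hθ : θ ≠ 0) (ha : a ≠ 0) : ∀ᶠ s in 𝓝 0, den lam θ m s ≠ 0 := by
  have h0 : den lam θ m 0 ≠ 0 := by rw [den_zero hm0]; positivity
  have hcont : ContinuousAt (den lam θ m) 0 :=
    (continuousAt_const.sub continuousAt_id).mul ((continuousAt_const.mul hm).sub continuousAt_id)
  exact hcont.eventually_ne h0

theorem hasDerivAt_mgfY (hm : HasDerivAt m m' 0) (hm0 : m 0 = a) (hlam : lam ≠ 0)
    (hθ : θ ≠ 0) (ha : a ≠ 0) :
    HasDerivAt (mgfY lam θ m) ((1 - a + a * θ) / (θ * lam * a)) 0 := by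
  have hq := (hasDerivAt_num (lam := lam) (θ := θ) hm).div (hasDerivAt_den (lam := lam) (θ := θ) hm)
    (by rw [den_zero hm0]; positivity)
  have h := ((hasDerivAt_id (0 : ℝ)).mul hq).const_add 1
  simp only [Pi.mul_apply, Pi.div_apply, id, one_mul, zero_mul, add_zero] at h
  refine (h.congr_of_eventuallyEq ?_).congr_deriv ?_
  · filter_upwards [eventually_den_ne_zero hm.continuousAt hm0 hlam hθ ha] with s hs
    simp [← mgfY_sub_one hs]
  · rw [num_zero hm0, den_zero hm0]
    field_simp

theorem mgfDelta_eventuallyEq (hm : HasDerivAt m m' 0) (hm0 : m 0 = a) (hlam : lam ≠ 0)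
    (hθ : θ ≠ 0) (ha : a ≠ 0) (hc : 1 - a + a * θ ≠ 0) :
    mgfDelta lam θ m a =ᶠ[𝓝 0]
      fun s => m s * num lam θ m s / (den lam θ m s * (a * ((1 - a + a * θ) / (θ * lam * a)))) := by
  filter_upwards [eventually_den_ne_zero hm.continuousAt hm0 hlam hθ ha] with s hs
  rw [mgfDelta, (hasDerivAt_mgfY hm hm0 hlam hθ ha).deriv]
  rcases eq_or_ne s 0 with rfl | hs0
  · rw [if_pos rfl, num_zero hm0, den_zero hm0, hm0]
    field_simp
  · rw [if_neg hs0, mgfY_sub_one hs]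
    field_simp

theorem hasDerivAt_mgfDelta (hm : HasDerivAt m m' 0) (hm0 : m 0 = a) (hlam : lam ≠ 0)
    (hθ : θ ≠ 0) (ha : a ≠ 0) (hc : 1 - a + a * θ ≠ 0) :
    HasDerivAt (mgfDelta lam θ m a)
      ((a * ((θ ^ 2 - θ) * (a + lam * m') + θ - 1) + 1) /
        (lam * a ^ 2 * (θ ^ 2 - θ) + lam * a * θ)) 0 := by
  have hden : den lam θ m 0 * (a * ((1 - a + a * θ) / (θ * lam * a))) ≠ 0 := by
    rw [den_zero hm0]; positivity
  have hg := (hm.mul (hasDerivAt_num (lam := lam) (θ := θ) hm)).div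
    ((hasDerivAt_den hm).mul_const _) hden
  refine (hg.congr_of_eventuallyEq (mgfDelta_eventuallyEq hm hm0 hlam hθ ha hc)).congr_deriv ?_
  rw [Pi.mul_apply, num_zero hm0, den_zero hm0, hm0]
  have hΔ : lam * a ^ 2 * (θ ^ 2 - θ) + lam * a * θ = lam * a * θ * (1 - a + a * θ) := by ring
  rw [hΔ]
  field_simp
  ring

end AoI

/-- The average AoI as the derivative at `0` of the continuous extension of
`M_δ(s) = M_U(s-θλ)(M_Y(s)-1)/(s M_U(-θλ) Ȳ)`, where
`M_Y(s) = λ(θλ-s)M_U(s-θλ)/((λ-s)(θλ M_U(s-θλ)-s))` and `Ȳ = M_Y'(0)`: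
it equals `Δ = [M_U(-θλ)((θ²-θ)(M_U(-θλ) + λ M_U'(-θλ)) + θ - 1) + 1] /
[λ M_U(-θλ)²(θ²-θ) + λ M_U(-θλ) θ]`. -/
theorem stmt_15 (lam θ : ℝ) (M : ℝ → ℝ)
    (hlam : 0 < lam) (hθ : θ ∈ Set.Ioc (0:ℝ) 1)
    (hM_pos : 0 < M (-(θ * lam))) (hM_lt : M (-(θ * lam)) < 1)
    (hM_smooth : ContDiffAt ℝ 2 M (-(θ * lam))) :
    let MY : ℝ → ℝ := fun s => lam * (θ * lam - s) * M (s - θ * lam) /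
      ((lam - s) * (θ * lam * M (s - θ * lam) - s))
    let Ybar : ℝ := deriv MY 0
    HasDerivAt (fun s : ℝ =>
        if s = 0 then 1
        else M (s - θ * lam) * (MY s - 1) / (s * M (-(θ * lam)) * Ybar))
      ((M (-(θ * lam)) * ((θ ^ 2 - θ) * (M (-(θ * lam)) + lam * deriv M (-(θ * lam)))
          + θ - 1) + 1) /
        (lam * M (-(θ * lam)) ^ 2 * (θ ^ 2 - θ) + lam * M (-(θ * lam)) * θ)) 0 := by
  obtain ⟨hθ0, -⟩ := hθ
  have hm : HasDerivAt (fun s => M (s - θ * lam)) (deriv M (-(θ * lam))) 0 :=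
    HasDerivAt.comp_sub_const 0 (θ * lam) (by
      simpa using (hM_smooth.differentiableAt two_ne_zero).hasDerivAt)
  have hc : 1 - M (-(θ * lam)) + M (-(θ * lam)) * θ ≠ 0 :=
    ne_of_gt (by linarith [mul_pos hM_pos hθ0])
  exact AoI.hasDerivAt_mgfDelta hm (by simp) hlam.ne' hθ0.ne' hM_pos.ne' hc
end
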